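/- Let D be a unital C*-algebra, γ a *-automorphism of D, and M_γ = {a ∈ C([0,1], D) : a(1) = γ(a(0))}. Let h : S¹ → S¹ be an orientation-preserving homeomorphism, and let t₀ ∈ (0, 1], s₀ ∈ [0, 1) and strictly increasing continuous bijections k₀ : [0, t₀] → [s₀, 1], k₁ : [t₀, 1] → [0, s₀] satisfy k₀(t₀) = 1, k₁(t₀) = 0, k₀(0) = k₁(1) = s₀, h(e^{2πit}) = e^{2πik₀(t)} for t ∈ [0, t₀] and h(e^{2πit}) = e^{2πik₁(t)} for t ∈ [t₀, 1]. Then the formula α(a)(t) = a(k₁⁻¹(t)) for t ∈ [0, s₀] and α(a)(t) = γ(a(k₀⁻¹(t))) for t ∈ [s₀, 1] defines a *-automorphism α of M_γ (in particular α(a) is a well-defined element of M_γ for each a ∈ M_γ); moreover α lies over h: for every continuous f : S¹ → ℂ and every a ∈ M_γ, α(η(f)·a) = η(f ∘ h⁻¹)·α(a), where η(f)·b denotes the function t ↦ f(e^{2πit}) b(t). -/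

import Mathlib

open Real

/-- The unit interval `[0,1] ⊆ ℝ`. -/
def I01 : Set ℝ := Set.Icc 0 1

lemma zero_mem_I01 : (0 : ℝ) ∈ I01 := by norm_num [I01]

lemma one_mem_I01 : (1 : ℝ) ∈ I01 := by norm_num [I01]

/-- The mapping torus `M_γ = {a ∈ C([0,1], D) : a(1) = γ(a(0))}`, as a subset of
`C([0,1], D)`. -/
def mappingTorusSet {D : Type*} [CStarAlgebra D] (γ : D ≃⋆ₐ[ℂ] D) : Set C(I01, D) :=
  {a | a ⟨1, one_mem_I01⟩ = γ (a ⟨0, zero_mem_I01⟩)}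

/-- The map `[0,1] → S¹`, `t ↦ e^{2πit}`, as a continuous map. -/
noncomputable def expI01 : C(I01, Circle) :=
  Circle.exp.comp ⟨fun t : I01 => 2 * π * (t : ℝ), by fun_prop⟩

/-- The central multiplier action of `C(S¹, ℂ)` on the mapping torus:
`(η(f)·b)(t) = f(e^{2πit}) b(t)`. -/
noncomputable def etaSmul {D : Type*} [CStarAlgebra D]
    (f : C(Circle, ℂ)) (b : C(I01, D)) : C(I01, D) :=
  (f.comp expI01) • b

/-!
The inverse branches `k₁⁻¹ : [0, s₀] → [t₀, 1]` and `k₀⁻¹ : [s₀, 1] → [0, t₀]` are continuous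
(continuous bijections of compact intervals), and the two pieces `a ∘ k₁⁻¹` and `γ ∘ a ∘ k₀⁻¹` of
`α(a)` agree at `s₀` precisely because `a(1) = γ(a(0))`; the endpoint values `k₀(t₀) = 1`,
`k₁(t₀) = 0` give `α(a) ∈ M_γ`. For each `t`, `a ↦ α(a)(t)` is an evaluation followed by `id` or
`γ`, hence a *-homomorphism, so `α` is a *-endomorphism of `M_γ`; the same construction with `k₀`,
`k₁` and `γ⁻¹` inverts it. Since `h` lifts to `k₀, k₁`, `h⁻¹(e^{2πit}) = e^{2πi k_j⁻¹(t)}`, which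
makes `α` lie over `h`.
-/

open Set
open scoped CStarAlgebra

namespace Set.BijOn

variable {k : ℝ → ℝ} {a b c d : ℝ}

lemma le_of_Icc (hk : BijOn k (Icc a b) (Icc c d)) (hab : a ≤ b) : c ≤ d :=
  nonempty_Icc.1 (hk.image_eq ▸ (nonempty_Icc.2 hab).image k)

noncomputable def invIcc (hk : BijOn k (Icc a b) (Icc c d)) (hcd : c ≤ d) (y : ℝ) : ℝ :=
  (hk.equiv k).symm (projIcc c d hcd y)

variable (hk : BijOn k (Icc a b) (Icc c d)) (hcd : c ≤ d)

lemma invIcc_mem (y : ℝ) : hk.invIcc hcd y ∈ Icc a b :=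
  ((hk.equiv k).symm _).2

lemma apply_invIcc {y : ℝ} (hy : y ∈ Icc c d) : k (hk.invIcc hcd y) = y := by
  rw [invIcc, projIcc_of_mem hcd hy]
  exact congrArg Subtype.val ((hk.equiv k).apply_symm_apply ⟨y, hy⟩)

lemma invIcc_apply {x : ℝ} (hx : x ∈ Icc a b) : hk.invIcc hcd (k x) = x :=
  hk.injOn (hk.invIcc_mem hcd _) hx (hk.apply_invIcc hcd (hk.mapsTo hx))

lemma continuous_invIcc (hcont : ContinuousOn k (Icc a b)) : Continuous (hk.invIcc hcd) :=
  continuous_subtype_val.comp <|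
    (Continuous.homeoOfEquivCompactToT2 (f := hk.equiv k)
      (hcont.mapsToRestrict hk.mapsTo)).symm.continuous.comp continuous_projIcc

end Set.BijOn

section ExtendById

variable {A : Type*} [Semiring A] [Algebra ℂ A] [StarRing A] [StarModule ℂ A]
  {S : StarSubalgebra ℂ A}

open Classical in
noncomputable def StarAlgEquiv.extendById (e : S ≃⋆ₐ[ℂ] S) (a : A) : A :=
  if ha : a ∈ S then e ⟨a, ha⟩ else a

namespace StarAlgEquiv

variable (e : S ≃⋆ₐ[ℂ] S) {a b : A}

lemma extendById_of_mem (ha : a ∈ S) : e.extendById a = e ⟨a, ha⟩ :=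
  dif_pos ha

lemma extendById_mem (ha : a ∈ S) : e.extendById a ∈ S := by
  rw [e.extendById_of_mem ha]
  exact (e _).2

lemma bijOn_extendById : BijOn e.extendById S S := by
  refine ⟨fun a ha => e.extendById_mem ha, fun a ha b hb hab => ?_, fun b hb => ?_⟩
  · rw [e.extendById_of_mem ha, e.extendById_of_mem hb] at hab
    exact congrArg Subtype.val (e.injective (Subtype.ext hab))
  · refine ⟨e.symm ⟨b, hb⟩, (e.symm _).2, ?_⟩
    rw [e.extendById_of_mem (e.symm _).2]
    simp

lemma extendById_add (ha : a ∈ S) (hb : b ∈ S) :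
    e.extendById (a + b) = e.extendById a + e.extendById b := by
  rw [e.extendById_of_mem ha, e.extendById_of_mem hb, e.extendById_of_mem (add_mem ha hb)]
  exact congrArg Subtype.val (map_add e ⟨a, ha⟩ ⟨b, hb⟩)

lemma extendById_mul (ha : a ∈ S) (hb : b ∈ S) :
    e.extendById (a * b) = e.extendById a * e.extendById b := by
  rw [e.extendById_of_mem ha, e.extendById_of_mem hb, e.extendById_of_mem (mul_mem ha hb)]
  exact congrArg Subtype.val (map_mul e ⟨a, ha⟩ ⟨b, hb⟩)

lemma extendById_star (ha : a ∈ S) : e.extendById (star a) = star (e.extendById a) := by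
  rw [e.extendById_of_mem ha, e.extendById_of_mem (star_mem ha)]
  exact congrArg Subtype.val (map_star e ⟨a, ha⟩)

lemma extendById_smul (c : ℂ) (ha : a ∈ S) : e.extendById (c • a) = c • e.extendById a := by
  rw [e.extendById_of_mem ha, e.extendById_of_mem (SMulMemClass.smul_mem c ha)]
  exact congrArg Subtype.val (map_smul e c ⟨a, ha⟩)

end StarAlgEquiv

end ExtendById

section PointwiseHom

variable {X D : Type*} [TopologicalSpace X] [CStarAlgebra D]

def ContinuousMap.evalAt (x : X) : C(X, D) →⋆ₐ[ℂ] D where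
  toFun a := a x
  map_one' := rfl
  map_mul' _ _ := rfl
  map_zero' := rfl
  map_add' _ _ := rfl
  commutes' _ := rfl
  map_star' _ := rfl

noncomputable def StarSubalgebra.pointwiseHom (S : StarSubalgebra ℂ C(X, D))
    (Φ : X → C(X, D) →⋆ₐ[ℂ] D) (hcont : ∀ a ∈ S, Continuous fun x => Φ x a)
    (hmem : ∀ a (ha : a ∈ S), ⟨fun x => Φ x a, hcont a ha⟩ ∈ S) : S →⋆ₐ[ℂ] S where
  toFun a := ⟨⟨fun x => Φ x a, hcont a a.2⟩, hmem a a.2⟩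
  map_one' := Subtype.ext <| ContinuousMap.ext fun x => map_one (Φ x)
  map_mul' a b := Subtype.ext <| ContinuousMap.ext fun x => map_mul (Φ x) (a : C(X, D)) b
  map_zero' := Subtype.ext <| ContinuousMap.ext fun x => map_zero (Φ x)
  map_add' a b := Subtype.ext <| ContinuousMap.ext fun x => map_add (Φ x) (a : C(X, D)) b
  commutes' c := Subtype.ext <| ContinuousMap.ext fun x => AlgHomClass.commutes (Φ x) c
  map_star' a := Subtype.ext <| ContinuousMap.ext fun x => map_star (Φ x) (a : C(X, D))

end PointwiseHom

section MappingTorus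

variable {D : Type*} [CStarAlgebra D]

noncomputable def evalClamp (x : ℝ) : C(I01, D) →⋆ₐ[ℂ] D :=
  ContinuousMap.evalAt (projIcc 0 1 zero_le_one x : I01)

lemma evalClamp_of_mem {x : ℝ} (hx : x ∈ I01) (a : C(I01, D)) : evalClamp x a = a ⟨x, hx⟩ :=
  congrArg a (projIcc_of_mem zero_le_one hx)

lemma continuous_evalClamp_comp {X : Type*} [TopologicalSpace X] {u : X → ℝ} (hu : Continuous u)
    (a : C(I01, D)) : Continuous fun x => evalClamp (u x) a :=
  a.continuous.comp (continuous_projIcc.comp hu)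

lemma evalClamp_smul (x : ℝ) (g : C(I01, ℂ)) (a : C(I01, D)) :
    evalClamp x (g • a) = evalClamp x g • evalClamp x a :=
  rfl

lemma evalClamp_comp_expI01 {x : ℝ} (hx : x ∈ I01) (f : C(Circle, ℂ)) :
    evalClamp x (f.comp expI01) = f (Circle.exp (2 * π * x)) := by
  rw [evalClamp_of_mem hx]
  rfl

lemma evalClamp_pointwiseHom {S : StarSubalgebra ℂ C(I01, D)} {Φ : I01 → C(I01, D) →⋆ₐ[ℂ] D}
    {hcont hmem} (a : S) {x : ℝ} (hx : x ∈ I01) :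
    evalClamp x (S.pointwiseHom Φ hcont hmem a : C(I01, D)) = Φ ⟨x, hx⟩ a :=
  evalClamp_of_mem hx _

variable {γ : D ≃⋆ₐ[ℂ] D}

variable (γ) in
noncomputable def mappingTorus : StarSubalgebra ℂ C(I01, D) :=
  StarAlgHom.equalizer (ContinuousMap.evalAt ⟨1, one_mem_I01⟩)
    ((γ : D →⋆ₐ[ℂ] D).comp (ContinuousMap.evalAt ⟨0, zero_mem_I01⟩))

lemma mem_mappingTorus_iff_evalClamp {a : C(I01, D)} :
    a ∈ mappingTorus γ ↔ evalClamp 1 a = γ (evalClamp 0 a) := by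
  rw [evalClamp_of_mem one_mem_I01, evalClamp_of_mem zero_mem_I01]
  rfl

lemma mappingTorus_ext {a b : mappingTorus γ}
    (h : ∀ x ∈ I01, evalClamp x (a : C(I01, D)) = evalClamp x b) : a = b :=
  Subtype.ext <| ContinuousMap.ext fun t => by simpa [evalClamp_of_mem t.2] using h t t.2

lemma etaSmul_mem_mappingTorus (f : C(Circle, ℂ)) {a : C(I01, D)}
    (ha : a ∈ mappingTorusSet γ) : etaSmul f a ∈ mappingTorusSet γ := by
  have hexp : expI01 ⟨1, one_mem_I01⟩ = expI01 ⟨0, zero_mem_I01⟩ := by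
    simp [expI01, Circle.exp_two_pi]
  change f (expI01 _) • a _ = γ (f (expI01 _) • a _)
  rw [ha, map_smul, hexp]

end MappingTorus

section PiecewiseEval

variable {D : Type*} [CStarAlgebra D] (c : ℝ) (F G : D →⋆ₐ[ℂ] D) (u v : ℝ → ℝ)

noncomputable def piecewiseEval (t : I01) : C(I01, D) →⋆ₐ[ℂ] D :=
  if (t : ℝ) ≤ c then F.comp (evalClamp (u t)) else G.comp (evalClamp (v t))

variable {c F G u v}

lemma piecewiseEval_of_le {t : I01} (ht : (t : ℝ) ≤ c) (a : C(I01, D)) :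
    piecewiseEval c F G u v t a = F (evalClamp (u t) a) := by
  simp [piecewiseEval, ht]

lemma piecewiseEval_of_ge {t : I01} (ht : c ≤ t) {a : C(I01, D)}
    (hc : F (evalClamp (u c) a) = G (evalClamp (v c) a)) :
    piecewiseEval c F G u v t a = G (evalClamp (v t) a) := by
  rcases ht.lt_or_eq with ht | ht
  · simp [piecewiseEval, not_le.2 ht]
  · rw [piecewiseEval_of_le ht.ge, ← ht, hc]

lemma continuous_piecewiseEval (hF : Continuous F) (hG : Continuous G) (hu : Continuous u)
    (hv : Continuous v) {a : C(I01, D)} (hc : F (evalClamp (u c) a) = G (evalClamp (v c) a)) :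
    Continuous fun t => piecewiseEval c F G u v t a := by
  simp only [piecewiseEval, apply_ite (fun φ : C(I01, D) →⋆ₐ[ℂ] D => φ a), StarAlgHom.comp_apply]
  exact Continuous.if_le (hF.comp (continuous_evalClamp_comp (hu.comp continuous_subtype_val) a))
    (hG.comp (continuous_evalClamp_comp (hv.comp continuous_subtype_val) a))
    continuous_subtype_val continuous_const fun t ht => by rw [ht, hc]

lemma piecewiseEval_smul (t : I01) (g : C(I01, ℂ)) (a : C(I01, D)) :
    piecewiseEval c F G u v t (g • a) =
      evalClamp (if (t : ℝ) ≤ c then u t else v t) g • piecewiseEval c F G u v t a := by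
  by_cases ht : (t : ℝ) ≤ c <;> simp [piecewiseEval, ht, evalClamp_smul]

end PiecewiseEval

/-- The piecewise lift `k₀, k₁` of a circle homeomorphism, cut open at `t₀`. -/
structure ArcSwap where
  t₀ : ℝ
  s₀ : ℝ
  k₀ : ℝ → ℝ
  k₁ : ℝ → ℝ
  t₀_mem : t₀ ∈ Icc (0 : ℝ) 1
  continuousOn_k₀ : ContinuousOn k₀ (Icc 0 t₀)
  continuousOn_k₁ : ContinuousOn k₁ (Icc t₀ 1)
  bijOn_k₀ : BijOn k₀ (Icc 0 t₀) (Icc s₀ 1)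
  bijOn_k₁ : BijOn k₁ (Icc t₀ 1) (Icc 0 s₀)
  k₀_t₀ : k₀ t₀ = 1
  k₁_t₀ : k₁ t₀ = 0
  k₀_zero : k₀ 0 = s₀
  k₁_one : k₁ 1 = s₀

namespace ArcSwap

variable (P : ArcSwap)

lemma s₀_le_one : P.s₀ ≤ 1 := P.bijOn_k₀.le_of_Icc P.t₀_mem.1

lemma s₀_nonneg : 0 ≤ P.s₀ := P.bijOn_k₁.le_of_Icc P.t₀_mem.2

noncomputable def inv₀ : ℝ → ℝ := P.bijOn_k₀.invIcc P.s₀_le_one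

noncomputable def inv₁ : ℝ → ℝ := P.bijOn_k₁.invIcc P.s₀_nonneg

noncomputable def clamp₀ (s : ℝ) : ℝ := P.k₀ (projIcc 0 P.t₀ P.t₀_mem.1 s)

noncomputable def clamp₁ (s : ℝ) : ℝ := P.k₁ (projIcc P.t₀ 1 P.t₀_mem.2 s)

lemma continuous_inv₀ : Continuous P.inv₀ := P.bijOn_k₀.continuous_invIcc _ P.continuousOn_k₀

lemma continuous_inv₁ : Continuous P.inv₁ := P.bijOn_k₁.continuous_invIcc _ P.continuousOn_k₁

lemma continuous_clamp₀ : Continuous P.clamp₀ :=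
  P.continuousOn_k₀.comp_continuous (continuous_subtype_val.comp continuous_projIcc)
    fun s => (projIcc _ _ _ s).2

lemma continuous_clamp₁ : Continuous P.clamp₁ :=
  P.continuousOn_k₁.comp_continuous (continuous_subtype_val.comp continuous_projIcc)
    fun s => (projIcc _ _ _ s).2

lemma inv₀_mem (y : ℝ) : P.inv₀ y ∈ Icc 0 P.t₀ := P.bijOn_k₀.invIcc_mem _ y

lemma inv₁_mem (y : ℝ) : P.inv₁ y ∈ Icc P.t₀ 1 := P.bijOn_k₁.invIcc_mem _ y

lemma k₀_inv₀ {y : ℝ} (hy : y ∈ Icc P.s₀ 1) : P.k₀ (P.inv₀ y) = y := P.bijOn_k₀.apply_invIcc _ hy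

lemma k₁_inv₁ {y : ℝ} (hy : y ∈ Icc 0 P.s₀) : P.k₁ (P.inv₁ y) = y := P.bijOn_k₁.apply_invIcc _ hy

lemma inv₀_k₀ {x : ℝ} (hx : x ∈ Icc 0 P.t₀) : P.inv₀ (P.k₀ x) = x := P.bijOn_k₀.invIcc_apply _ hx

lemma inv₁_k₁ {x : ℝ} (hx : x ∈ Icc P.t₀ 1) : P.inv₁ (P.k₁ x) = x := P.bijOn_k₁.invIcc_apply _ hx

lemma clamp₀_of_mem {s : ℝ} (hs : s ∈ Icc 0 P.t₀) : P.clamp₀ s = P.k₀ s := by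
  rw [clamp₀, projIcc_of_mem _ hs]

lemma clamp₁_of_mem {s : ℝ} (hs : s ∈ Icc P.t₀ 1) : P.clamp₁ s = P.k₁ s := by
  rw [clamp₁, projIcc_of_mem _ hs]

lemma inv₀_s₀ : P.inv₀ P.s₀ = 0 := by
  simpa [P.k₀_zero] using P.inv₀_k₀ ⟨le_rfl, P.t₀_mem.1⟩

lemma inv₀_one : P.inv₀ 1 = P.t₀ := by
  simpa [P.k₀_t₀] using P.inv₀_k₀ ⟨P.t₀_mem.1, le_rfl⟩

lemma inv₁_s₀ : P.inv₁ P.s₀ = 1 := by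
  simpa [P.k₁_one] using P.inv₁_k₁ ⟨P.t₀_mem.2, le_rfl⟩

lemma inv₁_zero : P.inv₁ 0 = P.t₀ := by
  simpa [P.k₁_t₀] using P.inv₁_k₁ ⟨le_rfl, P.t₀_mem.2⟩

lemma Icc_zero_t₀_subset : Icc 0 P.t₀ ⊆ I01 := Icc_subset_Icc le_rfl P.t₀_mem.2

lemma Icc_t₀_one_subset : Icc P.t₀ 1 ⊆ I01 := Icc_subset_Icc P.t₀_mem.1 le_rfl

variable {D : Type*} [CStarAlgebra D] (γ : D ≃⋆ₐ[ℂ] D)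

noncomputable def torusEval : I01 → C(I01, D) →⋆ₐ[ℂ] D :=
  piecewiseEval P.s₀ (StarAlgHom.id ℂ D) γ P.inv₁ P.inv₀

noncomputable def torusInvEval : I01 → C(I01, D) →⋆ₐ[ℂ] D :=
  piecewiseEval P.t₀ (γ.symm : D →⋆ₐ[ℂ] D) (StarAlgHom.id ℂ D) P.clamp₀ P.clamp₁

variable {P γ}

lemma torusEval_glue {a : C(I01, D)} (ha : a ∈ mappingTorus γ) :
    StarAlgHom.id ℂ D (evalClamp (P.inv₁ P.s₀) a) = γ (evalClamp (P.inv₀ P.s₀) a) := by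
  rw [P.inv₁_s₀, P.inv₀_s₀]
  exact mem_mappingTorus_iff_evalClamp.1 ha

lemma torusInvEval_glue {b : C(I01, D)} (hb : b ∈ mappingTorus γ) :
    (γ.symm : D →⋆ₐ[ℂ] D) (evalClamp (P.clamp₀ P.t₀) b) =
      StarAlgHom.id ℂ D (evalClamp (P.clamp₁ P.t₀) b) := by
  rw [P.clamp₀_of_mem ⟨P.t₀_mem.1, le_rfl⟩, P.clamp₁_of_mem ⟨le_rfl, P.t₀_mem.2⟩, P.k₀_t₀,
    P.k₁_t₀, mem_mappingTorus_iff_evalClamp.1 hb]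
  simp

lemma continuous_torusEval {a : C(I01, D)} (ha : a ∈ mappingTorus γ) :
    Continuous fun t => P.torusEval γ t a :=
  continuous_piecewiseEval continuous_id (map_continuous γ) P.continuous_inv₁ P.continuous_inv₀
    (torusEval_glue ha)

lemma continuous_torusInvEval {b : C(I01, D)} (hb : b ∈ mappingTorus γ) :
    Continuous fun t => P.torusInvEval γ t b :=
  continuous_piecewiseEval (map_continuous γ.symm) continuous_id P.continuous_clamp₀
    P.continuous_clamp₁ (torusInvEval_glue hb)

lemma torusEval_mem {a : C(I01, D)} (ha : a ∈ mappingTorus γ) :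
    ⟨fun t => P.torusEval γ t a, continuous_torusEval ha⟩ ∈ mappingTorus γ := by
  change P.torusEval γ _ a = γ (P.torusEval γ _ a)
  rw [torusEval, piecewiseEval_of_ge P.s₀_le_one (torusEval_glue ha),
    piecewiseEval_of_le P.s₀_nonneg]
  simp [P.inv₀_one, P.inv₁_zero]

lemma torusInvEval_mem {b : C(I01, D)} (hb : b ∈ mappingTorus γ) :
    ⟨fun t => P.torusInvEval γ t b, continuous_torusInvEval hb⟩ ∈ mappingTorus γ := by
  change P.torusInvEval γ _ b = γ (P.torusInvEval γ _ b)
  rw [torusInvEval, piecewiseEval_of_ge P.t₀_mem.2 (torusInvEval_glue hb),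
    piecewiseEval_of_le P.t₀_mem.1]
  simp [P.clamp₀_of_mem ⟨le_rfl, P.t₀_mem.1⟩, P.clamp₁_of_mem ⟨P.t₀_mem.2, le_rfl⟩, P.k₀_zero,
    P.k₁_one]

variable (P γ)

noncomputable def torusHom : mappingTorus γ →⋆ₐ[ℂ] mappingTorus γ :=
  (mappingTorus γ).pointwiseHom (P.torusEval γ) (fun _ => continuous_torusEval)
    (fun _ => torusEval_mem)

noncomputable def torusInvHom : mappingTorus γ →⋆ₐ[ℂ] mappingTorus γ :=
  (mappingTorus γ).pointwiseHom (P.torusInvEval γ) (fun _ => continuous_torusInvEval)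
    (fun _ => torusInvEval_mem)

variable {P γ}

lemma k₀_mem_I01 {s : ℝ} (hs : s ∈ Icc 0 P.t₀) : P.k₀ s ∈ I01 :=
  Icc_subset_Icc P.s₀_nonneg le_rfl (P.bijOn_k₀.mapsTo hs)

lemma k₁_mem_I01 {s : ℝ} (hs : s ∈ Icc P.t₀ 1) : P.k₁ s ∈ I01 :=
  Icc_subset_Icc le_rfl P.s₀_le_one (P.bijOn_k₁.mapsTo hs)

lemma evalClamp_torusHom_k₀ (a : mappingTorus γ) {s : ℝ} (hs : s ∈ Icc 0 P.t₀) :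
    evalClamp (P.k₀ s) (P.torusHom γ a : C(I01, D)) = γ (evalClamp s a) := by
  rw [torusHom, evalClamp_pointwiseHom _ (k₀_mem_I01 hs), torusEval,
    piecewiseEval_of_ge (P.bijOn_k₀.mapsTo hs).1 (torusEval_glue a.2), P.inv₀_k₀ hs]
  rfl

lemma evalClamp_torusHom_k₁ (a : mappingTorus γ) {s : ℝ} (hs : s ∈ Icc P.t₀ 1) :
    evalClamp (P.k₁ s) (P.torusHom γ a : C(I01, D)) = evalClamp s a := by
  rw [torusHom, evalClamp_pointwiseHom _ (k₁_mem_I01 hs), torusEval,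
    piecewiseEval_of_le (P.bijOn_k₁.mapsTo hs).2, P.inv₁_k₁ hs]
  rfl

lemma evalClamp_torusInvHom_of_le (b : mappingTorus γ) {s : ℝ} (hs : s ∈ Icc 0 P.t₀) :
    evalClamp s (P.torusInvHom γ b : C(I01, D)) = γ.symm (evalClamp (P.k₀ s) b) := by
  rw [torusInvHom, evalClamp_pointwiseHom _ (P.Icc_zero_t₀_subset hs), torusInvEval,
    piecewiseEval_of_le hs.2, P.clamp₀_of_mem hs]
  rfl

lemma evalClamp_torusInvHom_of_ge (b : mappingTorus γ) {s : ℝ} (hs : s ∈ Icc P.t₀ 1) :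
    evalClamp s (P.torusInvHom γ b : C(I01, D)) = evalClamp (P.k₁ s) b := by
  rw [torusInvHom, evalClamp_pointwiseHom _ (P.Icc_t₀_one_subset hs), torusInvEval,
    piecewiseEval_of_ge hs.1 (torusInvEval_glue b.2), P.clamp₁_of_mem hs]
  rfl

lemma torusInvHom_comp_torusHom : (P.torusInvHom γ).comp (P.torusHom γ) = .id ℂ _ := by
  refine StarAlgHom.ext fun a => mappingTorus_ext fun s hs => ?_
  rcases le_total s P.t₀ with hst | hst
  · rw [StarAlgHom.comp_apply, evalClamp_torusInvHom_of_le _ ⟨hs.1, hst⟩,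
      evalClamp_torusHom_k₀ _ ⟨hs.1, hst⟩, StarAlgEquiv.symm_apply_apply]
    rfl
  · rw [StarAlgHom.comp_apply, evalClamp_torusInvHom_of_ge _ ⟨hst, hs.2⟩,
      evalClamp_torusHom_k₁ _ ⟨hst, hs.2⟩]
    rfl

lemma torusHom_comp_torusInvHom : (P.torusHom γ).comp (P.torusInvHom γ) = .id ℂ _ := by
  refine StarAlgHom.ext fun b => mappingTorus_ext fun t ht => ?_
  rcases le_total t P.s₀ with hts | hts
  · rw [StarAlgHom.comp_apply, ← P.k₁_inv₁ ⟨ht.1, hts⟩,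
      evalClamp_torusHom_k₁ _ (P.inv₁_mem t), evalClamp_torusInvHom_of_ge _ (P.inv₁_mem t)]
    rfl
  · rw [StarAlgHom.comp_apply, ← P.k₀_inv₀ ⟨hts, ht.2⟩,
      evalClamp_torusHom_k₀ _ (P.inv₀_mem t), evalClamp_torusInvHom_of_le _ (P.inv₀_mem t),
      StarAlgEquiv.apply_symm_apply]
    rfl

variable (P γ)

noncomputable def torusAut : mappingTorus γ ≃⋆ₐ[ℂ] mappingTorus γ :=
  .ofStarAlgHom (P.torusHom γ) (P.torusInvHom γ) torusInvHom_comp_torusHom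
    torusHom_comp_torusInvHom

variable {P γ} {h : Circle ≃ₜ Circle}

lemma symm_exp_eq_exp_inv₁ (hlift₁ : ∀ t ∈ Icc P.t₀ 1,
      h (Circle.exp (2 * π * t)) = Circle.exp (2 * π * P.k₁ t))
    {t : ℝ} (ht : t ∈ Icc 0 P.s₀) :
    h.symm (Circle.exp (2 * π * t)) = Circle.exp (2 * π * P.inv₁ t) := by
  rw [Homeomorph.symm_apply_eq, hlift₁ _ (P.inv₁_mem t), P.k₁_inv₁ ht]

lemma symm_exp_eq_exp_inv₀ (hlift₀ : ∀ t ∈ Icc 0 P.t₀,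
      h (Circle.exp (2 * π * t)) = Circle.exp (2 * π * P.k₀ t))
    {t : ℝ} (ht : t ∈ Icc P.s₀ 1) :
    h.symm (Circle.exp (2 * π * t)) = Circle.exp (2 * π * P.inv₀ t) := by
  rw [Homeomorph.symm_apply_eq, hlift₀ _ (P.inv₀_mem t), P.k₀_inv₀ ht]

lemma torusHom_etaSmul
    (hlift₀ : ∀ t ∈ Icc 0 P.t₀, h (Circle.exp (2 * π * t)) = Circle.exp (2 * π * P.k₀ t))
    (hlift₁ : ∀ t ∈ Icc P.t₀ 1, h (Circle.exp (2 * π * t)) = Circle.exp (2 * π * P.k₁ t))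
    (f : C(Circle, ℂ)) (a : mappingTorus γ) :
    (P.torusHom γ ⟨etaSmul f a, etaSmul_mem_mappingTorus f a.2⟩ : C(I01, D)) =
      etaSmul (f.comp (h.symm : C(Circle, Circle))) (P.torusHom γ a) := by
  ext t
  change P.torusEval γ t (f.comp expI01 • (a : C(I01, D))) =
    f (h.symm (Circle.exp (2 * π * t))) • P.torusEval γ t a
  rw [torusEval, piecewiseEval_smul]
  congr 1
  split_ifs with ht
  · rw [symm_exp_eq_exp_inv₁ hlift₁ ⟨t.2.1, ht⟩,
      evalClamp_comp_expI01 (P.Icc_t₀_one_subset (P.inv₁_mem t))]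
  · rw [symm_exp_eq_exp_inv₀ hlift₀ ⟨(not_le.1 ht).le, t.2.2⟩,
      evalClamp_comp_expI01 (P.Icc_zero_t₀_subset (P.inv₀_mem t))]

end ArcSwap

theorem mappingTorus_automorphism_over_circle_homeo_general
    {D : Type*} [CStarAlgebra D] (γ : D ≃⋆ₐ[ℂ] D)
    (h : Circle ≃ₜ Circle)
    (t₀ s₀ : ℝ) (k₀ k₁ : ℝ → ℝ)
    (ht₀ : t₀ ∈ Set.Ioc (0 : ℝ) 1)
    (hk₀cont : ContinuousOn k₀ (Set.Icc 0 t₀))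
    (hk₀bij : Set.BijOn k₀ (Set.Icc 0 t₀) (Set.Icc s₀ 1))
    (hk₁cont : ContinuousOn k₁ (Set.Icc t₀ 1))
    (hk₁bij : Set.BijOn k₁ (Set.Icc t₀ 1) (Set.Icc 0 s₀))
    (hk₀t₀ : k₀ t₀ = 1) (hk₁t₀ : k₁ t₀ = 0) (hk₀0 : k₀ 0 = s₀) (hk₁1 : k₁ 1 = s₀)
    (hlift₀ : ∀ t ∈ Set.Icc (0 : ℝ) t₀,
      h (Circle.exp (2 * π * t)) = Circle.exp (2 * π * k₀ t))
    (hlift₁ : ∀ t ∈ Set.Icc t₀ (1 : ℝ),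
      h (Circle.exp (2 * π * t)) = Circle.exp (2 * π * k₁ t)) :
    ∃ α : C(I01, D) → C(I01, D),
      (∀ a ∈ mappingTorusSet γ, α a ∈ mappingTorusSet γ) ∧
      (∀ a ∈ mappingTorusSet γ, ∀ s : ℝ, ∀ (hs : s ∈ Set.Icc t₀ 1)
        (hks : k₁ s ∈ I01) (hs' : s ∈ I01), α a ⟨k₁ s, hks⟩ = a ⟨s, hs'⟩) ∧
      (∀ a ∈ mappingTorusSet γ, ∀ s : ℝ, ∀ (hs : s ∈ Set.Icc 0 t₀)
        (hks : k₀ s ∈ I01) (hs' : s ∈ I01), α a ⟨k₀ s, hks⟩ = γ (a ⟨s, hs'⟩)) ∧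
      Set.BijOn α (mappingTorusSet γ) (mappingTorusSet γ) ∧
      (∀ a ∈ mappingTorusSet γ, ∀ b ∈ mappingTorusSet γ,
        α (a + b) = α a + α b ∧ α (a * b) = α a * α b) ∧
      (∀ a ∈ mappingTorusSet γ, α (star a) = star (α a)) ∧
      (∀ (c : ℂ), ∀ a ∈ mappingTorusSet γ, α (c • a) = c • α a) ∧
      (∀ f : C(Circle, ℂ), ∀ a ∈ mappingTorusSet γ,
        α (etaSmul f a) = etaSmul (f.comp (h.symm : C(Circle, Circle))) (α a)) := by
  let P : ArcSwap := ⟨t₀, s₀, k₀, k₁, Ioc_subset_Icc_self ht₀, hk₀cont, hk₁cont, hk₀bij, hk₁bij,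
    hk₀t₀, hk₁t₀, hk₀0, hk₁1⟩
  let α := (P.torusAut γ).extendById
  have hα {a} (ha : a ∈ mappingTorusSet γ) : α a = P.torusHom γ ⟨a, ha⟩ :=
    (P.torusAut γ).extendById_of_mem ha
  refine ⟨α, fun a ha => (P.torusAut γ).extendById_mem ha, fun a ha s hs hks hs' => ?_,
    fun a ha s hs hks hs' => ?_, (P.torusAut γ).bijOn_extendById,
    fun a ha b hb => ⟨(P.torusAut γ).extendById_add ha hb, (P.torusAut γ).extendById_mul ha hb⟩,
    fun a ha => (P.torusAut γ).extendById_star ha,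
    fun c a ha => (P.torusAut γ).extendById_smul c ha, fun f a ha => ?_⟩
  · rw [hα ha, ← evalClamp_of_mem hks, ← evalClamp_of_mem hs']
    exact ArcSwap.evalClamp_torusHom_k₁ (P := P) _ hs
  · rw [hα ha, ← evalClamp_of_mem hks, ← evalClamp_of_mem hs']
    exact ArcSwap.evalClamp_torusHom_k₀ (P := P) _ hs
  · rw [hα ha, hα (etaSmul_mem_mappingTorus f ha)]
    exact ArcSwap.torusHom_etaSmul (P := P) hlift₀ hlift₁ f ⟨a, ha⟩

/-- Let `D` be a unital C*-algebra, `γ` a *-automorphism of `D`, and `M_γ`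
the mapping torus.  Let `h` be an orientation-preserving homeomorphism of the circle with the
associated data `t₀ ∈ (0,1]`, `s₀ ∈ [0,1)` and strictly increasing continuous bijections
`k₀ : [0,t₀] → [s₀,1]`, `k₁ : [t₀,1] → [0,s₀]` satisfying `k₀(t₀) = 1`, `k₁(t₀) = 0`,
`k₀(0) = k₁(1) = s₀` and lifting `h`.  Then the formula `α(a)(t) = a(k₁⁻¹(t))` on `[0,s₀]`
and `α(a)(t) = γ(a(k₀⁻¹(t)))` on `[s₀,1]` defines a *-automorphism `α` of `M_γ` which lies
over `h`. -/
theorem mappingTorus_automorphism_over_circle_homeo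
    {D : Type*} [CStarAlgebra D] (γ : D ≃⋆ₐ[ℂ] D)
    (h : Circle ≃ₜ Circle)
    (hor : ∃ k : ℝ → ℝ, Continuous k ∧ StrictMono k ∧ (∀ t : ℝ, k (t + 1) = k t + 1) ∧
      ∀ t : ℝ, h (Circle.exp (2 * π * t)) = Circle.exp (2 * π * k t))
    (t₀ s₀ : ℝ) (k₀ k₁ : ℝ → ℝ)
    (ht₀ : t₀ ∈ Set.Ioc (0 : ℝ) 1) (hs₀ : s₀ ∈ Set.Ico (0 : ℝ) 1)
    (hk₀cont : ContinuousOn k₀ (Set.Icc 0 t₀)) (hk₀mono : StrictMonoOn k₀ (Set.Icc 0 t₀))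
    (hk₀bij : Set.BijOn k₀ (Set.Icc 0 t₀) (Set.Icc s₀ 1))
    (hk₁cont : ContinuousOn k₁ (Set.Icc t₀ 1)) (hk₁mono : StrictMonoOn k₁ (Set.Icc t₀ 1))
    (hk₁bij : Set.BijOn k₁ (Set.Icc t₀ 1) (Set.Icc 0 s₀))
    (hk₀t₀ : k₀ t₀ = 1) (hk₁t₀ : k₁ t₀ = 0) (hk₀0 : k₀ 0 = s₀) (hk₁1 : k₁ 1 = s₀)
    (hlift₀ : ∀ t ∈ Set.Icc (0 : ℝ) t₀,
      h (Circle.exp (2 * π * t)) = Circle.exp (2 * π * k₀ t))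
    (hlift₁ : ∀ t ∈ Set.Icc t₀ (1 : ℝ),
      h (Circle.exp (2 * π * t)) = Circle.exp (2 * π * k₁ t)) :
    ∃ α : C(I01, D) → C(I01, D),
      (∀ a ∈ mappingTorusSet γ, α a ∈ mappingTorusSet γ) ∧
      (∀ a ∈ mappingTorusSet γ, ∀ s : ℝ, ∀ (hs : s ∈ Set.Icc t₀ 1)
        (hks : k₁ s ∈ I01) (hs' : s ∈ I01), α a ⟨k₁ s, hks⟩ = a ⟨s, hs'⟩) ∧
      (∀ a ∈ mappingTorusSet γ, ∀ s : ℝ, ∀ (hs : s ∈ Set.Icc 0 t₀)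
        (hks : k₀ s ∈ I01) (hs' : s ∈ I01), α a ⟨k₀ s, hks⟩ = γ (a ⟨s, hs'⟩)) ∧
      Set.BijOn α (mappingTorusSet γ) (mappingTorusSet γ) ∧
      (∀ a ∈ mappingTorusSet γ, ∀ b ∈ mappingTorusSet γ,
        α (a + b) = α a + α b ∧ α (a * b) = α a * α b) ∧
      (∀ a ∈ mappingTorusSet γ, α (star a) = star (α a)) ∧
      (∀ (c : ℂ), ∀ a ∈ mappingTorusSet γ, α (c • a) = c • α a) ∧
      (∀ f : C(Circle, ℂ), ∀ a ∈ mappingTorusSet γ,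
        α (etaSmul f a) = etaSmul (f.comp (h.symm : C(Circle, Circle))) (α a)) :=
  mappingTorus_automorphism_over_circle_homeo_general γ h t₀ s₀ k₀ k₁ ht₀ hk₀cont hk₀bij hk₁cont
    hk₁bij hk₀t₀ hk₁t₀ hk₀0 hk₁1 hlift₀ hlift₁
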